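/- Every HGV configuration in tree canonical form typed under a single environment is a well-typed GV configuration: if Γ ⊢ C : R holds in HGV, where Γ is a single type environment (a singleton hyper-environment) and C is in tree canonical form, then Γ ⊢ C : R holds in GV (where each ν-bound endpoint pair is typed by a GV channel-pair binding). -/

import Mathlib

set_option autoImplicit true
set_option maxHeartbeats 1000000

/-! ## HGV types and session types -/

mutual
inductive STy : Type
  | send : Ty → STy → STy      -- !T.S
  | recv : Ty → STy → STy      -- ?T.S
  | ends : STy                 -- end!
  | endr : STy                 -- end?
inductive Ty : Type
  | unit : Ty
  | void : Ty
  | fn   : Ty → Ty → Ty        -- T ⊸ U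
  | prod : Ty → Ty → Ty
  | sum  : Ty → Ty → Ty
  | sess : STy → Ty
end

/-- Session type duality. -/
def STy.dual : STy → STy
  | .send T S => .recv T S.dual
  | .recv T S => .send T S.dual
  | .ends => .endr
  | .endr => .ends

/-! ## HGV terms -/

inductive Term : Type
  | var : String → Term
  | unit : Term
  | lam : String → Term → Term
  | app : Term → Term → Term
  | letu : Term → Term → Term                    -- let () = M in N
  | pair : Term → Term → Term
  | letp : String → String → Term → Term → Term  -- let (x,y) = M in N
  | inl : Term → Term
  | inr : Term → Term
  | case : Term → String → Term → String → Term → Term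
  | absurd : Term → Term
  | fork : Term
  | send : Term
  | recv : Term
  | wait : Term
  | link : Term

inductive IsValue : Term → Prop
  | var : IsValue (.var x)
  | unit : IsValue .unit
  | lam : IsValue (.lam x M)
  | pair : IsValue V → IsValue W → IsValue (.pair V W)
  | inl : IsValue V → IsValue (.inl V)
  | inr : IsValue V → IsValue (.inr V)
  | fork : IsValue .fork
  | send : IsValue .send
  | recv : IsValue .recv
  | wait : IsValue .wait
  | link : IsValue .link

/-- Free variables of a term. -/
def Term.fv : Term → List String
  | .var x => [x]
  | .unit => []
  | .lam x M => M.fv.filter (fun y => y != x)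
  | .app M N => M.fv ++ N.fv
  | .letu M N => M.fv ++ N.fv
  | .pair M N => M.fv ++ N.fv
  | .letp x y M N => M.fv ++ N.fv.filter (fun z => z != x && z != y)
  | .inl M => M.fv
  | .inr M => M.fv
  | .case L x M y N => L.fv ++ M.fv.filter (fun z => z != x) ++ N.fv.filter (fun z => z != y)
  | .absurd M => M.fv
  | .fork => []
  | .send => []
  | .recv => []
  | .wait => []
  | .link => []

/-- Substitution of `N` for the variable `x` (capture is avoided by not
descending under binders that shadow `x`). -/
def Term.subst (N : Term) (x : String) : Term → Term
  | .var y => if y = x then N else .var y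
  | .unit => .unit
  | .lam y M => .lam y (if y = x then M else Term.subst N x M)
  | .app M₁ M₂ => .app (Term.subst N x M₁) (Term.subst N x M₂)
  | .letu M₁ M₂ => .letu (Term.subst N x M₁) (Term.subst N x M₂)
  | .pair M₁ M₂ => .pair (Term.subst N x M₁) (Term.subst N x M₂)
  | .letp y z M₁ M₂ => .letp y z (Term.subst N x M₁) (if y = x ∨ z = x then M₂ else Term.subst N x M₂)
  | .inl M => .inl (Term.subst N x M)
  | .inr M => .inr (Term.subst N x M)
  | .case L y M₁ z M₂ =>
      .case (Term.subst N x L) y (if y = x then M₁ else Term.subst N x M₁)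
        z (if z = x then M₂ else Term.subst N x M₂)
  | .absurd M => .absurd (Term.subst N x M)
  | .fork => .fork
  | .send => .send
  | .recv => .recv
  | .wait => .wait
  | .link => .link

/-! ## Linear type environments -/

abbrev Env := List (String × Ty)

/-- `Γ, Δ` is defined only when the domains are disjoint. -/
def Env.disj (Γ Δ : Env) : Prop := ∀ x T U, (x, T) ∈ Γ → (x, U) ∈ Δ → False

def Env.dom (Γ : Env) : List String := Γ.map Prod.fst

/-! ## Term typing -/

inductive HasType : Env → Term → Ty → Prop
  | var : HasType [(x, T)] (.var x) T
  | unit : HasType [] .unit .unit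
  | lam : HasType ((x, T) :: Γ) M U → HasType Γ (.lam x M) (.fn T U)
  | app : Env.disj Γ Δ → HasType Γ M (.fn T U) → HasType Δ N T →
      HasType (Γ ++ Δ) (.app M N) U
  | letu : Env.disj Γ Δ → HasType Γ M .unit → HasType Δ N T →
      HasType (Γ ++ Δ) (.letu M N) T
  | pair : Env.disj Γ Δ → HasType Γ M T → HasType Δ N U →
      HasType (Γ ++ Δ) (.pair M N) (.prod T U)
  | letp : Env.disj Γ Δ → HasType Γ M (.prod T T') →
      HasType ((x, T) :: (y, T') :: Δ) N U →
      HasType (Γ ++ Δ) (.letp x y M N) U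
  | inl : HasType Γ M T → HasType Γ (.inl M) (.sum T U)
  | inr : HasType Γ M U → HasType Γ (.inr M) (.sum T U)
  | case : Env.disj Γ Δ → HasType Γ L (.sum T T') →
      HasType ((x, T) :: Δ) M U → HasType ((y, T') :: Δ) N U →
      HasType (Γ ++ Δ) (.case L x M y N) U
  | absurd : Env.disj Γ Δ → HasType Γ M .void → HasType (Γ ++ Δ) (.absurd M) T
  | fork : HasType [] .fork (.fn (.fn (.sess S) (.sess .ends)) (.sess S.dual))
  | send : HasType [] .send (.fn (.prod T (.sess (.send T S))) (.sess S))
  | recv : HasType [] .recv (.fn (.sess (.recv T S)) (.prod T (.sess S)))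
  | wait : HasType [] .wait (.fn (.sess .endr) .unit)
  | link : HasType [] .link (.fn (.prod (.sess S) (.sess S.dual)) (.sess .ends))
  | perm : List.Perm Γ Δ → HasType Γ M T → HasType Δ M T

/-! ## Evaluation contexts -/

inductive ECtx : Type
  | hole : ECtx
  | appL : ECtx → Term → ECtx
  | appR : (V : Term) → IsValue V → ECtx → ECtx
  | letu : ECtx → Term → ECtx
  | pairL : ECtx → Term → ECtx
  | pairR : (V : Term) → IsValue V → ECtx → ECtx
  | letp : String → String → ECtx → Term → ECtx
  | inl : ECtx → ECtx
  | inr : ECtx → ECtx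
  | case : ECtx → String → Term → String → Term → ECtx
  | absurd : ECtx → ECtx

def ECtx.plug : ECtx → Term → Term
  | .hole, M => M
  | .appL E N, M => .app (E.plug M) N
  | .appR V _ E, M => .app V (E.plug M)
  | .letu E N, M => .letu (E.plug M) N
  | .pairL E N, M => .pair (E.plug M) N
  | .pairR V _ E, M => .pair V (E.plug M)
  | .letp x y E N, M => .letp x y (E.plug M) N
  | .inl E, M => .inl (E.plug M)
  | .inr E, M => .inr (E.plug M)
  | .case E x N₁ y N₂, M => .case (E.plug M) x N₁ y N₂
  | .absurd E, M => .absurd (E.plug M)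

/-! ## Term reduction M ⟶_M N -/

inductive TRed : Term → Term → Prop
  | beta : IsValue V → TRed (.app (.lam x M) V) (Term.subst V x M)
  | letu : TRed (.letu .unit M) M
  | letp : IsValue V → IsValue W →
      TRed (.letp x y (.pair V W) M) (Term.subst W y (Term.subst V x M))
  | caseL : IsValue V → TRed (.case (.inl V) x M y N) (Term.subst V x M)
  | caseR : IsValue V → TRed (.case (.inr V) x M y N) (Term.subst V y N)
  | lift : TRed M N → TRed (ECtx.plug E M) (ECtx.plug E N)
/-! ## Configuration types and partial merging -/

inductive RTy : Type
  | main : Ty → RTy   -- a configuration containing exactly one main thread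
  | child : RTy       -- a configuration of child threads only

/-- The partial merge `R₁ ⊓ R₂`, defined when at most one of the two is a
main-thread type. -/
def RTy.merge : RTy → RTy → Option RTy
  | .child, R => some R
  | .main T, .child => some (.main T)
  | .main _, .main _ => none

/-! ## HGV configurations -/

inductive TFlag : Type
  | main  : TFlag   -- ●
  | child : TFlag   -- ○

inductive Config : Type
  | thread : TFlag → Term → Config
  | par : Config → Config → Config                 -- C ∥ D
  | res : String → String → Config → Config        -- (νxy)C
  | linkTh : String → String → String → Config     -- link thread  z (x↔y)

def Config.fv : Config → List String
  | .thread _ M => M.fv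
  | .par C D => C.fv ++ D.fv
  | .res x y C => C.fv.filter (fun z => z != x && z != y)
  | .linkTh z x y => [z, x, y]

/-! ## Structural congruence of configurations -/

inductive Cong : Config → Config → Prop
  | parComm : Cong (.par C D) (.par D C)
  | parAssoc : Cong (.par C (.par D E)) (.par (.par C D) E)
  | resComm : Cong (.res x x' (.res y y' C)) (.res y y' (.res x x' C))
  | resSwap : Cong (.res x y C) (.res y x C)
  | scopeExt : x ∉ Config.fv C → y ∉ Config.fv C →
      Cong (.par C (.res x y D)) (.res x y (.par C D))
  | linkComm : Cong (.linkTh z x y) (.linkTh z y x)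
  | refl : Cong C C
  | symm : Cong C D → Cong D C
  | trans : Cong C D → Cong D E → Cong C E
  | parCong : Cong C C' → Cong D D' → Cong (.par C D) (.par C' D')
  | resCong : Cong C D → Cong (.res x y C) (.res x y D)

/-! ## Configuration typing with hyper-environments -/

abbrev HEnv := List Env

inductive CTyped : HEnv → Config → RTy → Prop
  | main : HasType Γ M T → CTyped [Γ] (.thread .main M) (.main T)
  | child : HasType Γ M (.sess .ends) → CTyped [Γ] (.thread .child M) .child
  | linkTh : CTyped [[(z, Ty.sess .endr), (x, Ty.sess S), (y, Ty.sess S.dual)]]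
      (.linkTh z x y) .child
  | par : CTyped G C R₁ → CTyped H D R₂ → RTy.merge R₁ R₂ = some R →
      CTyped (G ++ H) (.par C D) R
  | res : CTyped (((x, Ty.sess S) :: Γ₁) :: ((y, Ty.sess S.dual) :: Γ₂) :: G) C R →
      Env.disj Γ₁ Γ₂ → CTyped ((Γ₁ ++ Γ₂) :: G) (.res x y C) R
  | permH : List.Perm G H → CTyped G C R → CTyped H C R
  | permE : List.Perm Γ Δ → CTyped (Γ :: G) C R → CTyped (Δ :: G) C R

/-! ## Configuration reduction -/

inductive CRed : Config → Config → Prop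
  | reifyFork :
      IsValue V → x ≠ y →
      x ∉ Term.fv (ECtx.plug E (.app .fork V)) →
      y ∉ Term.fv (ECtx.plug E (.app .fork V)) →
      CRed (.thread φ (ECtx.plug E (.app .fork V)))
           (.res x y (.par (.thread φ (ECtx.plug E (.var x)))
                           (.thread .child (.app V (.var y)))))
  | commSend :
      IsValue V →
      CRed (.res x y (.par (.thread φ (ECtx.plug E (.app .send (.pair V (.var x)))))
                           (.thread ψ (ECtx.plug E' (.app .recv (.var y))))))
           (.res x y (.par (.thread φ (ECtx.plug E (.var x)))
                           (.thread ψ (ECtx.plug E' (.pair V (.var y))))))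
  | commClose :
      CRed (.res x y (.par (.thread φ (ECtx.plug E (.app .wait (.var x))))
                           (.thread .child (.var y))))
           (.thread φ (ECtx.plug E .unit))
  | reifyLink :
      z ≠ z' →
      z ∉ Term.fv (ECtx.plug E (.app .link (.pair (.var x) (.var y)))) →
      z' ∉ Term.fv (ECtx.plug E (.app .link (.pair (.var x) (.var y)))) →
      CRed (.thread φ (ECtx.plug E (.app .link (.pair (.var x) (.var y)))))
           (.res z z' (.par (.linkTh z x y) (.thread φ (ECtx.plug E (.var z')))))
  | commLink :
      CRed (.res z z' (.res x x' (.par (.linkTh z x y)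
              (.par (.thread .child (.var z')) (.thread φ M)))))
           (.thread φ (Term.subst (.var y) x' M))
  | res : CRed C D → CRed (.res x y C) (.res x y D)
  | par : CRed C C' → CRed (.par C D) (.par C' D)
  | liftM : TRed M N → CRed (.thread φ M) (.thread φ N)
  | equiv : Cong C C' → CRed C' D' → Cong D' D → CRed C D

/-! ## GV configuration typing -/

/-- Entries of GV type environments: ordinary bindings `x : T` and
channel-pair bindings `⟨x,x'⟩ : S♯`. -/
inductive GEntry : Type
  | single : String → Ty → GEntry
  | chan : String → String → STy → GEntry

abbrev GEnv := List GEntry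

def GEntry.isSingle : GEntry → Prop
  | .single _ _ => True
  | .chan _ _ _ => False

/-- View a plain type environment as a GV environment. -/
def Env.toGEnv (Γ : Env) : GEnv := Γ.map (fun p => GEntry.single p.1 p.2)

/-- Extract the ordinary bindings of a GV environment. -/
def GEnv.toEnv (Γ : GEnv) : Env :=
  Γ.filterMap (fun e => match e with | .single x T => some (x, T) | .chan _ _ _ => none)

/-- GV configuration typing: a single environment with channel-pair bindings;
parallel compositions must share exactly one channel. -/
inductive GTyped : GEnv → Config → RTy → Prop
  | main : HasType Γ M T → GTyped (Env.toGEnv Γ) (.thread .main M) (.main T)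
  | child : HasType Γ M (.sess .ends) → GTyped (Env.toGEnv Γ) (.thread .child M) .child
  | linkTh : GTyped [.single z (.sess .endr), .single x (.sess S), .single y (.sess S.dual)]
      (.linkTh z x y) .child
  | new : GTyped (GEntry.chan x y S :: Γ) C R → GTyped Γ (.res x y C) R
  | connect₁ : GTyped (GEntry.single y (.sess S) :: Γ₁) C R₁ →
      GTyped (GEntry.single y' (.sess S.dual) :: Γ₂) D R₂ →
      RTy.merge R₁ R₂ = some R →
      GTyped (GEntry.chan y y' S :: (Γ₁ ++ Γ₂)) (.par C D) R
  | connect₂ : GTyped (GEntry.single y' (.sess S.dual) :: Γ₁) C R₁ →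
      GTyped (GEntry.single y (.sess S) :: Γ₂) D R₂ →
      RTy.merge R₁ R₂ = some R →
      GTyped (GEntry.chan y y' S :: (Γ₁ ++ Γ₂)) (.par C D) R
  | perm : List.Perm Γ Δ → GTyped Γ C R → GTyped Δ C R

/-! ## Auxiliary threads, tree canonical forms, and blocked threads -/

/-- Auxiliary threads: child threads and link threads. -/
inductive Aux : Config → Prop
  | child : Aux (.thread .child M)
  | linkTh : Aux (.linkTh z x y)

/-- Tree canonical forms: `CF ::= φ M | (νxy)(A ∥ CF)` where the auxiliary
thread `A` uses the endpoint `x`. -/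
inductive TCF : Config → Prop
  | thread : TCF (.thread φ M)
  | res : Aux A → x ∈ Config.fv A → TCF C → TCF (.res x y (.par A C))

/-- A thread is blocked on an endpoint `z` if it is a link thread mentioning
`z`, or a thread whose term is an evaluation context filled with a
communication action (`send`, `recv` or `wait`) on `z`. -/
inductive BlockedOn : Config → String → Prop
  | linkZ : BlockedOn (.linkTh z x y) z
  | linkX : BlockedOn (.linkTh z x y) x
  | linkY : BlockedOn (.linkTh z x y) y
  | send : IsValue V → M = ECtx.plug E (.app .send (.pair V (.var z))) →
      BlockedOn (.thread φ M) z
  | recv : M = ECtx.plug E (.app .recv (.var z)) → BlockedOn (.thread φ M) z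
  | wait : M = ECtx.plug E (.app .wait (.var z)) → BlockedOn (.thread φ M) z

/-! Induction on the tree canonical form. HGV typing is closed under reordering, so inverting
`(νxy)(A ∥ CF)` under a single environment `Γ` only yields, up to reordering, a split
`Γ ~ Γ₁ ++ Γ₂` and a typing of `A ∥ CF` under the two environments `x : S, Γ₁` and
`y : S.dual, Γ₂`. The auxiliary thread `A` is typed under one of them and `CF` under the other,
which is exactly a GV channel-pair binding `⟨x, y⟩ : S♯` split by one of the two connect rules. -/

open List

namespace HEnv

def Equiv (G H : HEnv) : Prop :=
  G.map Multiset.ofList ~ H.map Multiset.ofList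

variable {G H K : HEnv} {Γ Δ Γ₁ Γ₂ : Env}

theorem Equiv.symm (h : G.Equiv H) : H.Equiv G := List.Perm.symm h

theorem Equiv.trans (h₁ : G.Equiv H) (h₂ : H.Equiv K) : G.Equiv K := List.Perm.trans h₁ h₂

theorem Equiv.of_perm (h : G ~ H) : G.Equiv H := h.map _

theorem Equiv.cons_of_perm (h : Γ ~ Δ) : Equiv (Γ :: G) (Δ :: G) := by
  simp only [Equiv, List.map_cons, Multiset.coe_eq_coe.mpr h, List.Perm.refl]

theorem singleton_equiv_cons_iff : Equiv [Γ] (Δ :: G) ↔ Γ ~ Δ ∧ G = [] := by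
  simp [Equiv, List.singleton_perm, Multiset.coe_eq_coe]

theorem exists_eq_singleton_of_pair_equiv_cons (h : Equiv [Γ₁, Γ₂] (Δ :: G)) :
    ∃ Δ', G = [Δ'] ∧ (Δ ~ Γ₁ ∧ Δ' ~ Γ₂ ∨ Δ ~ Γ₂ ∧ Δ' ~ Γ₁) := by
  rcases List.perm_pair.mp h.symm with h | h <;>
  · simp only [List.map_cons, List.cons.injEq, List.map_eq_singleton_iff] at h
    obtain ⟨hΔ, Δ', rfl, hΔ'⟩ := h
    simp_all [Multiset.coe_eq_coe]

end HEnv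

def Config.IsThread : Config → Prop
  | .thread _ _ | .linkTh _ _ _ => True
  | .par _ _ | .res _ _ _ => False

theorem Aux.isThread {A : Config} (hA : Aux A) : A.IsThread := by
  cases hA <;> trivial

theorem GTyped.toGEnv_perm {Γ Δ : Env} {C : Config} {R : RTy} (h : Γ ~ Δ)
    (hC : GTyped Γ.toGEnv C R) : GTyped Δ.toGEnv C R :=
  .perm (h.map _) hC

theorem CTyped.exists_gtyped_of_isThread {G : HEnv} {C : Config} {R : RTy} (h : CTyped G C R)
    (hC : C.IsThread) : ∃ Γ, G = [Γ] ∧ GTyped Γ.toGEnv C R := by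
  induction h with
  | main h => exact ⟨_, rfl, .main h⟩
  | child h => exact ⟨_, rfl, .child h⟩
  | linkTh => exact ⟨_, rfl, .linkTh⟩
  | par | res => cases hC
  | permH hp _ ih =>
    obtain ⟨Γ, rfl, hΓ⟩ := ih hC
    exact ⟨Γ, (List.singleton_perm.mp hp).symm, hΓ⟩
  | permE hp _ ih =>
    obtain ⟨Γ, hG, hΓ⟩ := ih hC
    cases hG
    exact ⟨_, rfl, hΓ.toGEnv_perm hp⟩

theorem CTyped.inv_par {G : HEnv} {C D : Config} {R : RTy} (h : CTyped G (.par C D) R) :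
    ∃ G₁ G₂ R₁ R₂, CTyped G₁ C R₁ ∧ CTyped G₂ D R₂ ∧ R₁.merge R₂ = some R ∧
      G.Equiv (G₁ ++ G₂) := by
  generalize hCD : Config.par C D = CD at h
  induction h with
  | main | child | linkTh | res => cases hCD
  | par h₁ h₂ hR => cases hCD; exact ⟨_, _, _, _, h₁, h₂, hR, .of_perm (.refl _)⟩
  | permH hp _ ih =>
    obtain ⟨G₁, G₂, R₁, R₂, h₁, h₂, hR, hG⟩ := ih hCD
    exact ⟨G₁, G₂, R₁, R₂, h₁, h₂, hR, (HEnv.Equiv.of_perm hp).symm.trans hG⟩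
  | permE hp _ ih =>
    obtain ⟨G₁, G₂, R₁, R₂, h₁, h₂, hR, hG⟩ := ih hCD
    exact ⟨G₁, G₂, R₁, R₂, h₁, h₂, hR, (HEnv.Equiv.cons_of_perm hp).symm.trans hG⟩

theorem CTyped.inv_res {G : HEnv} {x y : String} {C : Config} {R : RTy}
    (h : CTyped G (.res x y C) R) :
    ∃ S Γ₁ Γ₂ G', CTyped (((x, .sess S) :: Γ₁) :: ((y, .sess S.dual) :: Γ₂) :: G') C R ∧
      G.Equiv ((Γ₁ ++ Γ₂) :: G') := by
  generalize hxyC : Config.res x y C = xyC at h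
  induction h with
  | main | child | linkTh | par => cases hxyC
  | res h => cases hxyC; exact ⟨_, _, _, _, h, .of_perm (.refl _)⟩
  | permH hp _ ih =>
    obtain ⟨S, Γ₁, Γ₂, G', hC, hG⟩ := ih hxyC
    exact ⟨S, Γ₁, Γ₂, G', hC, (HEnv.Equiv.of_perm hp).symm.trans hG⟩
  | permE hp _ ih =>
    obtain ⟨S, Γ₁, Γ₂, G', hC, hG⟩ := ih hxyC
    exact ⟨S, Γ₁, Γ₂, G', hC, (HEnv.Equiv.cons_of_perm hp).symm.trans hG⟩

theorem GTyped.res_par {Γ Γ₁ Γ₂ Δ₁ Δ₂ : Env} {x y : String} {S : STy} {A D : Config}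
    {R₁ R₂ R : RTy} (hA : GTyped Δ₁.toGEnv A R₁) (hD : GTyped Δ₂.toGEnv D R₂)
    (hR : R₁.merge R₂ = some R) (hΓ : Γ ~ Γ₁ ++ Γ₂)
    (hΔ : Δ₁ ~ (x, .sess S) :: Γ₁ ∧ Δ₂ ~ (y, .sess S.dual) :: Γ₂ ∨
      Δ₁ ~ (y, .sess S.dual) :: Γ₂ ∧ Δ₂ ~ (x, .sess S) :: Γ₁) :
    GTyped Γ.toGEnv (.res x y (.par A D)) R := by
  have hΓ' : Γ.toGEnv ~ Γ₁.toGEnv ++ Γ₂.toGEnv := by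
    simpa only [Env.toGEnv, List.map_append] using hΓ.map fun p => GEntry.single p.1 p.2
  refine .new (S := S) ?_
  rcases hΔ with ⟨hΔ₁, hΔ₂⟩ | ⟨hΔ₁, hΔ₂⟩
  · exact .perm (.cons _ hΓ'.symm) (.connect₁ (hA.toGEnv_perm hΔ₁) (hD.toGEnv_perm hΔ₂) hR)
  · exact .perm (.cons _ (hΓ'.trans perm_append_comm).symm)
      (.connect₂ (hA.toGEnv_perm hΔ₁) (hD.toGEnv_perm hΔ₂) hR)

/-- **Every HGV configuration in tree canonical form typed under a single
environment is a well-typed GV configuration**: if `Γ ⊢ C : R` in HGV (with a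
singleton hyper-environment) and `C` is in tree canonical form, then
`Γ ⊢ C : R` in GV. -/
theorem hgv_in_gv (Γ : Env) (C : Config) (R : RTy)
    (hty : CTyped [Γ] C R) (hcf : TCF C) :
    GTyped (Env.toGEnv Γ) C R := by
  induction hcf generalizing Γ R with
  | thread =>
    obtain ⟨Γ', hΓ', hC⟩ := hty.exists_gtyped_of_isThread trivial
    cases hΓ'
    exact hC
  | res hAux _ _ ih =>
    obtain ⟨S, Γ₁, Γ₂, G', hAD, hG⟩ := hty.inv_res
    obtain ⟨hΓ, rfl⟩ := HEnv.singleton_equiv_cons_iff.mp hG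
    obtain ⟨G₁, G₂, R₁, R₂, hA, hD, hR, hG₁₂⟩ := hAD.inv_par
    obtain ⟨Δ₁, rfl, hAg⟩ := hA.exists_gtyped_of_isThread hAux.isThread
    obtain ⟨Δ₂, rfl, hΔ⟩ := HEnv.exists_eq_singleton_of_pair_equiv_cons hG₁₂
    exact .res_par hAg (ih Δ₂ R₂ hD) hR hΓ hΔ
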